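/- arXiv:2404.16733 — 4 statements merged into one kernel-verified Lean document; each statement's English description precedes it below -/
import Mathlib

section
/- The number of Fibonacci sets of rank N equals the N-th Fibonacci number F(N+1) (with F(1)=F(2)=1), i.e. |YFS_0|=1, |YFS_1|=1, and |YFS_N| = |YFS_{N-1}| + |YFS_{N-2}| for N ≥ 2. -/
/-- `S` is a Fibonacci set of rank `N`: a subset of `{1,…,N}` whose cardinality has the
same parity as `N`, and whose `ℓ`-th smallest element (1-indexed) has the same parity as `ℓ`. -/
def IsFibSet (N : ℕ) (S : Finset ℕ) : Prop :=
  S ⊆ Finset.Icc 1 N ∧ S.card % 2 = N % 2 ∧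
    ∀ i < S.card, ((S.sort (· ≤ ·)).getD i 0) % 2 = (i + 1) % 2

open Classical in
noncomputable def numFibSets (N : ℕ) : ℕ :=
  (((Finset.Icc 1 N).powerset).filter (IsFibSet N)).card

/-! A Fibonacci set of rank `N + 2` either contains `N + 2`, and removing it leaves a Fibonacci
set of rank `N + 1`, or it does not. In the second case it cannot contain `N + 1` either: the
largest element of a Fibonacci set has the parity of its cardinality, which is that of `N`. So it
is a Fibonacci set of rank `N`, and both correspondences are bijections. -/

theorem Finset.sort_insert_of_forall_lt {α : Type*} [LinearOrder α] {a : α} {s : Finset α}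
    (h : ∀ b ∈ s, b < a) : (insert a s).sort (· ≤ ·) = s.sort (· ≤ ·) ++ [a] := by
  refine List.Perm.eq_of_sortedLE (Finset.pairwise_sort _ _).sortedLE ?_ ?_
  · refine (List.pairwise_append.2
      ⟨Finset.pairwise_sort _ _, List.pairwise_singleton _ a, ?_⟩).sortedLE
    simp only [Finset.mem_sort, List.mem_singleton]
    rintro b hb _ rfl
    exact (h b hb).le
  · rw [List.perm_ext_iff_of_nodup (Finset.sort_nodup _ _)]
    · simp [or_comm]
    · simpa [List.nodup_append, Finset.sort_nodup] using fun b hb => (h b hb).ne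

def HasAlternatingParity (S : Finset ℕ) : Prop :=
  ∀ i < S.card, (S.sort (· ≤ ·)).getD i 0 % 2 = (i + 1) % 2

theorem hasAlternatingParity_insert_iff {S : Finset ℕ} {a : ℕ} (h : ∀ b ∈ S, b < a) :
    HasAlternatingParity (insert a S) ↔
      HasAlternatingParity S ∧ a % 2 = (S.card + 1) % 2 := by
  have hcard : (insert a S).card = S.card + 1 :=
    Finset.card_insert_of_notMem fun ha => (h a ha).false
  have hlen : (S.sort (· ≤ ·)).length = S.card := Finset.length_sort _
  unfold HasAlternatingParity
  rw [hcard, Finset.sort_insert_of_forall_lt h]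
  have hlast : (S.sort (· ≤ ·) ++ [a]).getD S.card 0 = a := by
    rw [List.getD_append_right _ _ _ _ hlen.le, hlen, Nat.sub_self]; rfl
  have hinit {i : ℕ} (hi : i < S.card) :
      (S.sort (· ≤ ·) ++ [a]).getD i 0 = (S.sort (· ≤ ·)).getD i 0 :=
    List.getD_append _ _ _ _ (hlen ▸ hi)
  constructor
  · intro hS
    refine ⟨fun i hi => hinit hi ▸ hS i (by omega), hlast ▸ hS S.card (by omega)⟩
  · rintro ⟨hS, ha⟩ i hi
    obtain hi | rfl := Nat.lt_succ_iff_lt_or_eq.mp hi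
    · exact hinit hi ▸ hS i hi
    · rwa [hlast]

theorem HasAlternatingParity.max'_mod_two {S : Finset ℕ} (hS : HasAlternatingParity S)
    (hne : S.Nonempty) : S.max' hne % 2 = S.card % 2 := by
  have hlt : ∀ b ∈ S.erase (S.max' hne), b < S.max' hne := fun b hb =>
    S.lt_max'_of_mem_erase_max' hne hb
  rw [← Finset.insert_erase (S.max'_mem hne), hasAlternatingParity_insert_iff hlt] at hS
  rw [hS.2, Finset.card_erase_add_one (S.max'_mem hne)]

theorem isFibSet_iff {N : ℕ} {S : Finset ℕ} :
    IsFibSet N S ↔ S ⊆ Finset.Icc 1 N ∧ S.card % 2 = N % 2 ∧ HasAlternatingParity S :=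
  Iff.rfl

theorem isFibSet_succ_insert_iff {N : ℕ} {S : Finset ℕ} (hS : S ⊆ Finset.Icc 1 N) :
    IsFibSet (N + 1) (insert (N + 1) S) ↔ IsFibSet N S := by
  have hlt : ∀ b ∈ S, b < N + 1 := fun b hb => Nat.lt_succ_of_le (Finset.mem_Icc.mp (hS hb)).2
  have hsub : insert (N + 1) S ⊆ Finset.Icc 1 (N + 1) :=
    Finset.insert_subset (by simp) (hS.trans (Finset.Icc_subset_Icc_right N.le_succ))
  rw [isFibSet_iff, isFibSet_iff, hasAlternatingParity_insert_iff hlt,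
    Finset.card_insert_of_notMem fun h => (hlt _ h).false]
  constructor
  · rintro ⟨-, hcard, hS', -⟩
    exact ⟨hS, by omega, hS'⟩
  · rintro ⟨-, hcard, hS'⟩
    exact ⟨hsub, by omega, hS', by omega⟩

theorem isFibSet_add_two_iff_of_notMem {N : ℕ} {S : Finset ℕ} (hN : N + 2 ∉ S) :
    IsFibSet (N + 2) S ↔ IsFibSet N S := by
  have hmod : (N + 2) % 2 = N % 2 := Nat.add_mod_right N 2
  rw [isFibSet_iff, isFibSet_iff, hmod]
  refine and_congr_left fun ⟨_, hS⟩ => ⟨fun hsub x hx => ?_,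
    fun hsub => hsub.trans (Finset.Icc_subset_Icc_right (by omega))⟩
  have hle : ∀ y ∈ S, y ≤ N + 1 := fun y hy => by
    have := (Finset.mem_Icc.mp (hsub hy)).2
    have : y ≠ N + 2 := fun h => hN (h ▸ hy)
    omega
  refine Finset.mem_Icc.mpr ⟨(Finset.mem_Icc.mp (hsub hx)).1,
    Nat.le_of_lt_succ (lt_of_le_of_ne (hle x hx) fun hxN => ?_)⟩
  -- the largest element would be `N + 1`, of the wrong parity
  have hmax : S.max' ⟨x, hx⟩ = N + 1 :=
    le_antisymm (Finset.max'_le _ _ _ hle) (hxN ▸ S.le_max' x hx)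
  have := hS.max'_mod_two ⟨x, hx⟩
  omega

open Classical in
noncomputable def fibSets (N : ℕ) : Finset (Finset ℕ) :=
  ((Finset.Icc 1 N).powerset).filter (IsFibSet N)

theorem mem_fibSets {N : ℕ} {S : Finset ℕ} : S ∈ fibSets N ↔ IsFibSet N S := by
  simpa [fibSets] using fun h => h.1

theorem numFibSets_eq_card_fibSets (N : ℕ) : numFibSets N = (fibSets N).card := rfl

theorem card_filter_mem_fibSets_succ (N : ℕ) :
    ((fibSets (N + 1)).filter (N + 1 ∈ ·)).card = (fibSets N).card := by
  refine Finset.card_nbij' (·.erase (N + 1)) (insert (N + 1)) ?_ ?_ ?_ ?_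
  · intro S hS
    simp only [Finset.mem_coe, Finset.mem_filter, mem_fibSets] at hS ⊢
    have hsub : S.erase (N + 1) ⊆ Finset.Icc 1 N := fun x hx => by
      have := Finset.mem_Icc.mp (hS.1.1 (Finset.mem_of_mem_erase hx))
      have := Finset.ne_of_mem_erase hx
      exact Finset.mem_Icc.mpr (by omega)
    rw [← isFibSet_succ_insert_iff hsub, Finset.insert_erase hS.2]
    exact hS.1
  · intro T hT
    simp only [Finset.mem_coe, Finset.mem_filter, mem_fibSets] at hT ⊢
    exact ⟨(isFibSet_succ_insert_iff hT.1).mpr hT, Finset.mem_insert_self _ _⟩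
  · intro S hS
    exact Finset.insert_erase (Finset.mem_filter.mp hS).2
  · intro T hT
    refine Finset.erase_insert fun h => ?_
    have := (Finset.mem_Icc.mp ((mem_fibSets.mp hT).1 h)).2
    omega

theorem filter_notMem_fibSets_add_two (N : ℕ) :
    (fibSets (N + 2)).filter (N + 2 ∉ ·) = fibSets N := by
  ext S
  rw [Finset.mem_filter, mem_fibSets, mem_fibSets]
  refine ⟨fun ⟨h, hN⟩ => (isFibSet_add_two_iff_of_notMem hN).mp h, fun h => ?_⟩
  have hN : N + 2 ∉ S := fun hN => by have := (Finset.mem_Icc.mp (h.1 hN)).2; omega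
  exact ⟨(isFibSet_add_two_iff_of_notMem hN).mpr h, hN⟩

theorem numFibSets_add_two (N : ℕ) :
    numFibSets (N + 2) = numFibSets (N + 1) + numFibSets N := by
  classical
  simp only [numFibSets_eq_card_fibSets]
  rw [← Finset.card_filter_add_card_filter_not (s := fibSets (N + 2)) (N + 2 ∈ ·),
    card_filter_mem_fibSets_succ, filter_notMem_fibSets_add_two]

theorem isFibSet_empty : IsFibSet 0 ∅ := by
  simp [IsFibSet]

theorem numFibSets_zero : numFibSets 0 = 1 := by
  rw [numFibSets_eq_card_fibSets, Finset.card_eq_one]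
  refine ⟨∅, Finset.eq_singleton_iff_unique_mem.mpr ⟨mem_fibSets.mpr isFibSet_empty, ?_⟩⟩
  exact fun S hS => Finset.subset_empty.mp ((mem_fibSets.mp hS).1.trans (by simp))

theorem numFibSets_one : numFibSets 1 = 1 := by
  rw [numFibSets_eq_card_fibSets, Finset.card_eq_one]
  have h1 : IsFibSet 1 {1} :=
    (isFibSet_succ_insert_iff (Finset.empty_subset _)).mpr isFibSet_empty
  refine ⟨{1}, Finset.eq_singleton_iff_unique_mem.mpr ⟨mem_fibSets.mpr h1, fun S hS => ?_⟩⟩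
  obtain ⟨hsub, hcard, -⟩ := mem_fibSets.mp hS
  obtain rfl | rfl := Finset.subset_singleton_iff.mp (by simpa using hsub)
  · simp at hcard
  · rfl

theorem numFibSets_eq_fib (N : ℕ) : numFibSets N = Nat.fib (N + 1) := by
  induction N using Nat.twoStepInduction with
  | zero => exact numFibSets_zero
  | one => exact numFibSets_one
  | more n ih₀ ih₁ =>
    rw [numFibSets_add_two, ih₀, ih₁, Nat.fib_add_two (n := n + 1), add_comm]

/-- The number of Fibonacci sets of rank `N` is the Fibonacci number `F (N+1)`
(with `F 1 = F 2 = 1`, i.e. `Nat.fib`); in particular `|YFS_0| = |YFS_1| = 1` and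
the counts satisfy the Fibonacci recurrence. -/
theorem card_fibSets (N : ℕ) :
    numFibSets N = Nat.fib (N + 1) ∧ numFibSets 0 = 1 ∧ numFibSets 1 = 1 ∧
      (2 ≤ N → numFibSets N = numFibSets (N - 1) + numFibSets (N - 2)) := by
  refine ⟨numFibSets_eq_fib N, numFibSets_zero, numFibSets_one, fun hN => ?_⟩
  obtain ⟨n, rfl⟩ := Nat.exists_eq_add_of_le' hN
  exact numFibSets_add_two n
end

section
/- In the monoid generated by e_1, ..., e_{N−1} subject to the relations e_i² = e_i, e_i e_j = e_j e_i for |i−j| ≥ 2, and e_{i+1} e_i e_{i+1} = e_{i+1}, every element equals e_σ := ∏_{i=1}^N e_{i−1} e_{i−2} ⋯ e_{i−c_i} for a unique permutation σ ∈ S_N with code (c_1,...,c_N); consequently the Okada monoid O_N has cardinality N!. -/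
/-- The defining relations of the Okada monoid on `n` generators `e_1, …, e_n`
(indexed by `Fin n`, with `i : Fin n` standing for `e_{i+1}`):
`e_i² = e_i`, `e_i e_j = e_j e_i` for `|i - j| ≥ 2`, and `e_{i+1} e_i e_{i+1} = e_{i+1}`. -/
inductive OkadaRel (n : ℕ) : FreeMonoid (Fin n) → FreeMonoid (Fin n) → Prop
  | idem (i : Fin n) : OkadaRel n (.of i * .of i) (.of i)
  | comm (i j : Fin n) (h : (i : ℕ) + 2 ≤ (j : ℕ)) :
      OkadaRel n (.of i * .of j) (.of j * .of i)
  | braid (i j : Fin n) (h : (j : ℕ) = (i : ℕ) + 1) :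
      OkadaRel n (.of j * .of i * .of j) (.of j)

/-- The Okada monoid on `n` generators: the free monoid on `n` generators modulo the
congruence generated by the Okada relations.  The Okada monoid `O_N` of the paper is
`OkadaMonoid (N - 1)`. -/
def OkadaMonoid (n : ℕ) := (conGen (OkadaRel n)).Quotient

instance (n : ℕ) : Monoid (OkadaMonoid n) :=
  inferInstanceAs (Monoid (conGen (OkadaRel n)).Quotient)

/-- The generator `e_{i+1}` of the Okada monoid. -/
def okadaGen (n : ℕ) (i : Fin n) : OkadaMonoid n :=
  (conGen (OkadaRel n)).mk' (FreeMonoid.of i)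

/-- The generator `e_a` (`1`-indexed) of the Okada monoid, or `1` if out of range. -/
def okadaGenN (n : ℕ) (a : ℕ) : OkadaMonoid n :=
  if h : a - 1 < n then okadaGen n ⟨a - 1, h⟩ else 1

/-- The (0-indexed) code of a permutation `σ` of `Fin N`:
`c_i = #{ j < i : σ⁻¹ j > σ⁻¹ i }`. -/
def permCode {N : ℕ} (σ : Equiv.Perm (Fin N)) (i : Fin N) : ℕ :=
  (Finset.univ.filter (fun j : Fin N => j < i ∧ σ⁻¹ i < σ⁻¹ j)).card

/-- The element `e_σ := ∏_{i=1}^N e_{i-1} e_{i-2} ⋯ e_{i-c_i}` of the Okada monoid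
`O_N = OkadaMonoid (N-1)` associated to the permutation `σ` via its code. -/
def okadaElt {N : ℕ} (σ : Equiv.Perm (Fin N)) : OkadaMonoid (N - 1) :=
  ((List.finRange N).flatMap
    (fun i => (List.range (permCode σ i)).map
      (fun t => okadaGenN (N - 1) ((i : ℕ) - t)))).prod

/-!
Write `g_a = e_{a+1}` and view `OkadaMonoid m` inside `OkadaMonoid (m + 1)` via `castSucc`.
Every element of `OkadaMonoid (m + 1)` is `x * g_m g_{m-1} ⋯ g_b` for a unique pair
`(x, b) ∈ OkadaMonoid m × Fin (m + 2)`: existence because right multiplication by a generator maps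
such products to such products (the braid relation lets `g_v` be absorbed into the decreasing run,
`run_mul_gen`), uniqueness because these rewriting rules define a right action of
`OkadaMonoid (m + 1)` on the pairs whose orbit map through `(1, m + 1)` inverts the product.
Hence `|O_{N+1}| = (N + 1) |O_N|`. Iterating the decomposition, every element is some `e_σ`:
appending the run `g_m ⋯ g_b` corresponds to inserting the largest value at position `b` of a
permutation, which appends the code entry `m + 1 - b`. As `|S_N| = N!`, `σ ↦ e_σ` is bijective.
-/

namespace OkadaMonoid

variable {m : ℕ}

theorem okadaGen_mul_self (i : Fin m) : okadaGen m i * okadaGen m i = okadaGen m i :=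
  (Con.eq _).2 <| .of _ _ (.idem i)

theorem okadaGen_mul_comm (i j : Fin m) (h : (i : ℕ) + 2 ≤ j) :
    okadaGen m i * okadaGen m j = okadaGen m j * okadaGen m i :=
  (Con.eq _).2 <| .of _ _ (.comm i j h)

theorem okadaGen_braid (i j : Fin m) (h : (j : ℕ) = i + 1) :
    okadaGen m j * okadaGen m i * okadaGen m j = okadaGen m j :=
  (Con.eq _).2 <| .of _ _ (.braid i j h)

def lift {M : Type*} [Monoid M] (f : Fin m → M) (mul_self : ∀ i, f i * f i = f i)
    (mul_comm : ∀ i j : Fin m, (i : ℕ) + 2 ≤ j → f i * f j = f j * f i)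
    (braid : ∀ i j : Fin m, (j : ℕ) = i + 1 → f j * f i * f j = f j) : OkadaMonoid m →* M :=
  Con.lift _ (FreeMonoid.lift f) <| Con.conGen_le.mpr fun x y h => by
    rw [Con.ker_rel]
    cases h with
    | idem i => simpa using mul_self i
    | comm i j h => simpa using mul_comm i j h
    | braid i j h => simpa using braid i j h

@[simp]
theorem lift_okadaGen {M : Type*} [Monoid M] (f : Fin m → M) (h₁ h₂ h₃) (i : Fin m) :
    lift f h₁ h₂ h₃ (okadaGen m i) = f i :=
  FreeMonoid.lift_eval_of f i

@[elab_as_elim]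
theorem induction_on {P : OkadaMonoid m → Prop} (x : OkadaMonoid m) (one : P 1)
    (mul_okadaGen : ∀ x i, P x → P (x * okadaGen m i)) : P x := by
  induction x using Con.induction_on with
  | _ w =>
  obtain ⟨l, rfl⟩ := FreeMonoid.ofList.surjective w
  induction l using List.reverseRecOn with
  | nil => exact one
  | append_singleton l i ih =>
    rw [FreeMonoid.ofList_append, FreeMonoid.ofList_singleton, Con.coe_mul]
    exact mul_okadaGen _ i ih

def gen (m a : ℕ) : OkadaMonoid m :=
  if h : a < m then okadaGen m ⟨a, h⟩ else 1

@[simp]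
theorem gen_val (i : Fin m) : gen m i = okadaGen m i := dif_pos i.isLt

theorem gen_mul_self (a : ℕ) : gen m a * gen m a = gen m a := by
  by_cases h : a < m
  · simpa [gen, h] using okadaGen_mul_self ⟨a, h⟩
  · simp [gen, h]

theorem commute_gen_gen {a b : ℕ} (h : a + 2 ≤ b) : Commute (gen m a) (gen m b) := by
  by_cases hb : b < m
  · simpa [commute_iff_eq, gen, hb, show a < m by omega] using
      okadaGen_mul_comm ⟨a, by omega⟩ ⟨b, hb⟩ h
  · simp [gen, hb]

theorem gen_succ_mul_gen_mul_gen_succ {a : ℕ} (h : a + 1 < m) :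
    gen m (a + 1) * gen m a * gen m (a + 1) = gen m (a + 1) := by
  simpa [gen, h, show a < m by omega] using okadaGen_braid ⟨a, by omega⟩ ⟨a + 1, h⟩ rfl

/-- `run m b l = g_{b+l-1} ⋯ g_{b+1} g_b`. -/
def run (m b : ℕ) : ℕ → OkadaMonoid m
  | 0 => 1
  | l + 1 => gen m (b + l) * run m b l

@[simp] theorem run_zero (b : ℕ) : run m b 0 = 1 := rfl

theorem run_succ (b l : ℕ) : run m b (l + 1) = gen m (b + l) * run m b l := rfl

theorem run_add (b l₁ l₂ : ℕ) : run m b (l₁ + l₂) = run m (b + l₂) l₁ * run m b l₂ := by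
  induction l₁ with
  | zero => simp
  | succ l ih => rw [Nat.add_right_comm, run_succ, ih, run_succ, ← mul_assoc, Nat.add_right_comm,
      Nat.add_assoc b]

theorem run_succ' (b l : ℕ) : run m b (l + 1) = run m (b + 1) l * gen m b := by
  rw [run_add, run_succ, run_zero, mul_one]
  rfl

theorem run_mul_gen_self {b l : ℕ} (hl : l ≠ 0) : run m b l * gen m b = run m b l := by
  obtain ⟨l, rfl⟩ := Nat.exists_eq_succ_of_ne_zero hl
  rw [run_succ', mul_assoc, gen_mul_self]

theorem commute_gen_run {v b l : ℕ} (h : v + 2 ≤ b ∨ b + l + 1 ≤ v) :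
    Commute (gen m v) (run m b l) := by
  induction l with
  | zero => exact Commute.one_right _
  | succ l ih =>
    refine Commute.mul_right ?_ (ih (by omega))
    rcases h with h | h
    · exact commute_gen_gen (by omega)
    · exact (commute_gen_gen (by omega)).symm

theorem commute_run_run {b₁ l₁ b₂ l₂ : ℕ} (h : b₁ + l₁ + 1 ≤ b₂) :
    Commute (run m b₁ l₁) (run m b₂ l₂) := by
  induction l₁ with
  | zero => exact Commute.one_left _
  | succ l ih => exact (commute_gen_run (Or.inl (by omega))).mul_left (ih (by omega))

/-- For `v + 1 = b` and `v = b` the left factor is `run m b 0 = 1` (truncated subtraction). -/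
theorem run_mul_gen {b l v : ℕ} (hbv : b ≤ v + 1) (hvl : v + 1 ≤ b + l) (hv : v < m) :
    run m b l * gen m v = run m b (v - 1 - b) * run m v (b + l - v) := by
  rcases Nat.lt_trichotomy v b with hlt | rfl | hgt
  · obtain rfl : b = v + 1 := by omega
    rw [Nat.sub_eq_zero_of_le (by omega), run_zero, one_mul, ← run_succ']
    congr 1; omega
  · rw [run_mul_gen_self (by omega), Nat.sub_eq_zero_of_le (by omega), run_zero, one_mul,
      Nat.add_sub_cancel_left]
  · obtain ⟨k, rfl⟩ : ∃ k, v = b + k + 1 := ⟨v - b - 1, by omega⟩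
    obtain ⟨j, rfl⟩ : ∃ j, l = j + (k + 2) := ⟨l - (k + 2), by omega⟩
    have hcomm : Commute (run m b k) (gen m (b + k + 1)) :=
      (commute_gen_run (Or.inr (by omega))).symm
    have hcomm' : Commute (run m b k) (run m (b + k + 1) (j + 1)) := commute_run_run le_rfl
    rw [show b + k + 1 - 1 - b = k by omega, show b + (j + (k + 2)) - (b + k + 1) = j + 1 by omega,
      hcomm'.eq]
    calc run m b (j + (k + 2)) * gen m (b + k + 1)
        = run m (b + k + 2) j * (gen m (b + k + 1) * gen m (b + k) * gen m (b + k + 1)) *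
            run m b k := by
          rw [run_add, run_succ, run_succ]
          simp only [mul_assoc, show b + (k + 2) = b + k + 2 by omega,
            show b + (k + 1) = b + k + 1 by omega, hcomm.eq]
      _ = run m (b + k + 1) (j + 1) * run m b k := by
          rw [gen_succ_mul_gen_mul_gen_succ hv, run_succ']

def castSucc : OkadaMonoid m →* OkadaMonoid (m + 1) :=
  lift (fun i => okadaGen (m + 1) i.castSucc) (fun _ => okadaGen_mul_self _)
    (fun _ _ h => okadaGen_mul_comm _ _ h) (fun _ _ h => okadaGen_braid _ _ h)

theorem castSucc_gen {a : ℕ} (h : a < m) : castSucc (gen m a) = gen (m + 1) a := by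
  simp [castSucc, gen, h, show a < m + 1 by omega]

theorem castSucc_run {b l : ℕ} (h : b + l ≤ m) : castSucc (run m b l) = run (m + 1) b l := by
  induction l with
  | zero => exact map_one _
  | succ l ih => rw [run_succ, map_mul, castSucc_gen (by omega), ih (by omega), run_succ]

/-- Right multiplication by `g_v` on `(x, b)`, which stands for
`castSucc x * run (m + 1) b (m + 1 - b)` (`ofPair`). For `b ∈ {v, v + 1}` the run in the second
branch is empty: `g_v` is absorbed into, resp. extends, the top run. -/
def actGen (v : Fin (m + 1)) (p : OkadaMonoid m × Fin (m + 2)) : OkadaMonoid m × Fin (m + 2) :=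
  if (v : ℕ) + 2 ≤ p.2 then (p.1 * gen m v, p.2) else (p.1 * run m p.2 (v - 1 - p.2), v.castSucc)

theorem actGen_of_le {v : Fin (m + 1)} {x : OkadaMonoid m} {b : Fin (m + 2)}
    (h : (v : ℕ) + 2 ≤ b) : actGen v (x, b) = (x * gen m v, b) := if_pos h

theorem actGen_of_lt {v : Fin (m + 1)} {x : OkadaMonoid m} {b : Fin (m + 2)}
    (h : (b : ℕ) < v + 2) : actGen v (x, b) = (x * run m b (v - 1 - b), v.castSucc) :=
  if_neg (not_le.2 h)

theorem actGen_actGen_self (v : Fin (m + 1)) (p : OkadaMonoid m × Fin (m + 2)) :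
    actGen v (actGen v p) = actGen v p := by
  obtain ⟨x, b⟩ := p
  rcases le_or_gt ((v : ℕ) + 2) b with h | h
  · rw [actGen_of_le h, actGen_of_le h, mul_assoc, gen_mul_self]
  · rw [actGen_of_lt h, actGen_of_lt (b := v.castSucc) (by simp), Fin.val_castSucc,
      show (v : ℕ) - 1 - v = 0 by omega, run_zero, mul_one]

theorem actGen_comm (v w : Fin (m + 1)) (hvw : (v : ℕ) + 2 ≤ w) (p : OkadaMonoid m × Fin (m + 2)) :
    actGen w (actGen v p) = actGen v (actGen w p) := by
  obtain ⟨x, b⟩ := p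
  rcases le_or_gt ((w : ℕ) + 2) b with hb | hb
  · rw [actGen_of_le (v := v) (by omega), actGen_of_le hb, actGen_of_le hb,
      actGen_of_le (v := v) (by omega), mul_assoc, mul_assoc, (commute_gen_gen hvw).eq]
  rcases le_or_gt ((v : ℕ) + 2) b with hb' | hb'
  · rw [actGen_of_le hb', actGen_of_lt hb, actGen_of_lt hb, actGen_of_le (by simpa using hvw),
      mul_assoc, mul_assoc, (commute_gen_run (Or.inl hb')).eq]
  · have hw := w.isLt
    rw [actGen_of_lt hb', actGen_of_lt (v := w) (by simp; omega), actGen_of_lt hb,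
      actGen_of_le (by simpa using hvw), mul_assoc, mul_assoc, Fin.val_castSucc,
      run_mul_gen (by omega) (by omega) (by omega), show b + ((w : ℕ) - 1 - b) = w - 1 by omega,
      show (w : ℕ) - 1 - v = w - 1 - v by omega]

theorem actGen_braid (v w : Fin (m + 1)) (hvw : (w : ℕ) = v + 1)
    (p : OkadaMonoid m × Fin (m + 2)) : actGen w (actGen v (actGen w p)) = actGen w p := by
  obtain ⟨x, b⟩ := p
  rcases le_or_gt ((w : ℕ) + 2) b with hb | hb
  · have hb' := b.isLt
    rw [actGen_of_le hb, actGen_of_le (v := v) (by omega), actGen_of_le hb, mul_assoc, mul_assoc,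
      ← mul_assoc (gen m w), hvw, gen_succ_mul_gen_mul_gen_succ (by omega)]
  · rw [actGen_of_lt hb, actGen_of_lt (v := v) (by simp; omega),
      actGen_of_lt (v := w) (by simp; omega)]
    simp [hvw, show (v : ℕ) - 1 - (v + 1) = 0 by omega]

def actHom : OkadaMonoid (m + 1) →* (Function.End (OkadaMonoid m × Fin (m + 2)))ᵐᵒᵖ :=
  lift (fun v => .op (actGen v))
    (fun v => MulOpposite.unop_injective (funext (actGen_actGen_self v)))
    (fun v w h => MulOpposite.unop_injective (funext (actGen_comm v w h)))
    (fun v w h => MulOpposite.unop_injective (funext (actGen_braid v w h)))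

def toPair (x : OkadaMonoid (m + 1)) : OkadaMonoid m × Fin (m + 2) :=
  (actHom x).unop (1, Fin.last _)

def ofPair (p : OkadaMonoid m × Fin (m + 2)) : OkadaMonoid (m + 1) :=
  castSucc p.1 * run (m + 1) p.2 (m + 1 - p.2)

theorem toPair_one : toPair (1 : OkadaMonoid (m + 1)) = (1, Fin.last _) := rfl

theorem toPair_mul_okadaGen (x : OkadaMonoid (m + 1)) (v : Fin (m + 1)) :
    toPair (x * okadaGen (m + 1) v) = actGen v (toPair x) := by
  rw [toPair, map_mul, MulOpposite.unop_mul, actHom, lift_okadaGen]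
  rfl

theorem ofPair_actGen (v : Fin (m + 1)) (p : OkadaMonoid m × Fin (m + 2)) :
    ofPair (actGen v p) = ofPair p * okadaGen (m + 1) v := by
  obtain ⟨x, b⟩ := p
  have hv := v.isLt
  have hb := b.isLt
  rw [← gen_val]
  rcases le_or_gt ((v : ℕ) + 2) b with h | h
  · rw [actGen_of_le h, ofPair, ofPair, map_mul, castSucc_gen (by omega), mul_assoc, mul_assoc,
      (commute_gen_run (Or.inl h)).eq]
  · have hrun : castSucc (run m b (v - 1 - b)) = run (m + 1) b (v - 1 - b) := by
      rcases Nat.eq_zero_or_pos (v - 1 - b) with h' | h'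
      · rw [h', run_zero, run_zero, map_one]
      · exact castSucc_run (by omega)
    rw [actGen_of_lt h]
    simp only [ofPair]
    rw [map_mul, hrun, mul_assoc, mul_assoc, run_mul_gen (by omega) (by omega) hv,
      Fin.val_castSucc, show b + (m + 1 - b) - v = m + 1 - v by omega]

theorem ofPair_toPair (x : OkadaMonoid (m + 1)) : ofPair (toPair x) = x := by
  induction x using induction_on with
  | one => simp [toPair_one, ofPair]
  | mul_okadaGen x v ih => rw [toPair_mul_okadaGen, ofPair_actGen, ih]

theorem toPair_castSucc (x : OkadaMonoid m) : toPair (castSucc x) = (x, Fin.last _) := by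
  induction x using induction_on with
  | one => rw [map_one, toPair_one]
  | mul_okadaGen x i ih =>
    rw [map_mul, castSucc, lift_okadaGen, ← castSucc, toPair_mul_okadaGen, ih,
      actGen_of_le (by simp), Fin.val_castSucc, gen_val]

theorem toPair_mul_run {z : OkadaMonoid (m + 1)} {x : OkadaMonoid m} {c b : Fin (m + 2)} {l : ℕ}
    (hz : toPair z = (x, c)) (hc : (c : ℕ) = b + l) : toPair (z * run (m + 1) b l) = (x, b) := by
  induction l generalizing z c with
  | zero => rw [run_zero, mul_one, hz, Fin.ext hc]
  | succ l ih =>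
    have hv : (b : ℕ) + l < m + 1 := by omega
    have hz' : toPair (z * gen (m + 1) (b + l)) = (x, Fin.castSucc ⟨b + l, hv⟩) := by
      rw [show gen (m + 1) (b + l) = okadaGen (m + 1) ⟨b + l, hv⟩ from gen_val ⟨b + l, hv⟩,
        toPair_mul_okadaGen, hz, actGen_of_lt (by simp; omega),
        show (b : ℕ) + l - 1 - c = 0 by omega, run_zero, mul_one]
    rw [run_succ, ← mul_assoc]
    exact ih hz' rfl

theorem toPair_ofPair (p : OkadaMonoid m × Fin (m + 2)) : toPair (ofPair p) = p :=
  toPair_mul_run (toPair_castSucc p.1) (by simp; omega)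

def succEquiv : OkadaMonoid (m + 1) ≃ OkadaMonoid m × Fin (m + 2) where
  toFun := toPair
  invFun := ofPair
  left_inv := ofPair_toPair
  right_inv := toPair_ofPair

instance : Unique (OkadaMonoid 0) where
  default := 1
  uniq x := induction_on x rfl fun _ i => i.elim0

theorem card_eq_factorial (m : ℕ) : Nat.card (OkadaMonoid m) = (m + 1).factorial := by
  induction m with
  | zero => exact Nat.card_unique
  | succ m ih =>
    rw [Nat.card_congr succEquiv, Nat.card_prod, ih, Nat.card_fin, Nat.factorial_succ (m + 1),
      mul_comm]

end OkadaMonoid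

theorem permCode_le {N : ℕ} (σ : Equiv.Perm (Fin N)) (i : Fin N) : permCode σ i ≤ i :=
  calc permCode σ i ≤ (Finset.univ.filter fun j : Fin N => (j : ℕ) < i).card :=
        Finset.card_le_card (Finset.monotone_filter_right _ fun _ _ h => h.1)
    _ = i := by rw [Fin.card_filter_val_lt]; omega

namespace Equiv.Perm

/-- In one-line notation, insert the new largest value `n` at position `k`. -/
def insertLastAt {n : ℕ} (σ : Perm (Fin n)) (k : Fin (n + 1)) : Perm (Fin (n + 1)) :=
  (finSuccEquiv' k).trans ((optionCongr σ).trans finSuccEquivLast.symm)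

variable {n : ℕ} (σ : Perm (Fin n)) (k : Fin (n + 1))

@[simp]
theorem insertLastAt_inv_last : (insertLastAt σ k)⁻¹ (Fin.last n) = k := by
  simp [insertLastAt, Perm.inv_def, ← optionCongr_symm]

@[simp]
theorem insertLastAt_inv_castSucc (j : Fin n) :
    (insertLastAt σ k)⁻¹ j.castSucc = k.succAbove (σ⁻¹ j) := by
  simp [insertLastAt, Perm.inv_def, ← optionCongr_symm]

theorem permCode_insertLastAt_castSucc (i : Fin n) :
    permCode (insertLastAt σ k) i.castSucc = permCode σ i := by
  rw [permCode, permCode, Finset.card_filter, Finset.card_filter, Fin.sum_univ_castSucc]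
  simp [Fin.succAbove_lt_succAbove_iff, not_lt.2 (Fin.castSucc_lt_last i).le]

theorem permCode_insertLastAt_last : permCode (insertLastAt σ k) (Fin.last n) = n - k := by
  rw [permCode, Finset.card_filter, Fin.sum_univ_castSucc]
  simp only [Fin.castSucc_lt_last, true_and, Fin.lt_succAbove_iff_le_castSucc, lt_self_iff_false,
    false_and, if_false, add_zero, ← Finset.card_filter, insertLastAt_inv_castSucc,
    insertLastAt_inv_last]
  rw [Finset.card_equiv σ⁻¹ (t := .filter (fun p : Fin n => (k : ℕ) ≤ p) .univ)
    (by simp [Fin.le_def])]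
  have hsplit := Finset.card_filter_add_card_filter_not (s := .univ) (fun p : Fin n => (p : ℕ) < k)
  simp only [Fin.card_filter_val_lt, Finset.card_univ, Fintype.card_fin, not_lt] at hsplit
  omega

end Equiv.Perm

namespace OkadaMonoid

theorem prod_okadaGenN_eq_run (m : ℕ) {i c : ℕ} (h : c ≤ i) :
    ((List.range c).map fun t => okadaGenN m (i - t)).prod = run m (i - c) c := by
  induction c generalizing i with
  | zero => rfl
  | succ c ih =>
    rw [List.range_succ_eq_map, List.map_cons, List.prod_cons, List.map_map]
    have ih' := ih (i := i - 1) (by omega)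
    simp only [Function.comp_def, Nat.succ_eq_add_one, Nat.sub_sub, Nat.add_comm 1] at ih' ⊢
    rw [ih', run_succ, show i - (c + 1) + c = i - 1 by omega]
    rfl

theorem okadaElt_eq_prod_run {N : ℕ} (σ : Equiv.Perm (Fin N)) :
    okadaElt σ =
      ((List.finRange N).map fun i => run (N - 1) (i - permCode σ i) (permCode σ i)).prod := by
  rw [okadaElt, List.flatMap_def, List.prod_flatten, List.map_map]
  exact congrArg _ (List.map_congr_left fun i _ => prod_okadaGenN_eq_run _ (permCode_le σ i))

theorem okadaElt_insertLastAt {n : ℕ} (σ : Equiv.Perm (Fin (n + 1))) (k : Fin (n + 2)) :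
    okadaElt (σ.insertLastAt k) = ofPair (okadaElt σ, k) := by
  rw [okadaElt_eq_prod_run, okadaElt_eq_prod_run, List.finRange_succ_last, List.map_append,
    List.prod_append, List.map_map, ofPair, map_list_prod, List.map_map]
  congr 1
  · refine congrArg _ (List.map_congr_left fun i _ => ?_)
    have := permCode_le σ i
    simp only [Function.comp_apply, Fin.val_castSucc, Equiv.Perm.permCode_insertLastAt_castSucc]
    exact (castSucc_run (by omega)).symm
  · have := k.isLt
    simp [Equiv.Perm.permCode_insertLastAt_last, show n + 1 - (n + 1 - k) = k by omega]

end OkadaMonoid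

theorem okadaElt_surjective : ∀ N, Function.Surjective (okadaElt (N := N))
  | 0 | 1 => fun _ => ⟨1, Subsingleton.elim (α := OkadaMonoid 0) _ _⟩
  | n + 2 => fun x => by
    obtain ⟨σ, hσ⟩ := okadaElt_surjective (n + 1) (OkadaMonoid.toPair x).1
    exact ⟨σ.insertLastAt (OkadaMonoid.toPair x).2, by
      rw [OkadaMonoid.okadaElt_insertLastAt, hσ, OkadaMonoid.ofPair_toPair]⟩

/-- Every element of the Okada monoid `O_N` equals `e_σ` for a unique permutation
`σ ∈ S_N`; consequently `O_N` has cardinality `N!`. -/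
theorem okadaMonoid_card (N : ℕ) :
    Function.Bijective (okadaElt (N := N)) ∧
      Nat.card (OkadaMonoid (N - 1)) = N.factorial := by
  have hcard : Nat.card (OkadaMonoid (N - 1)) = N.factorial := by
    rcases N with _ | n
    · exact Nat.card_unique (α := OkadaMonoid 0)
    · exact OkadaMonoid.card_eq_factorial n
  refine ⟨(okadaElt_surjective N).bijective_of_nat_card_le ?_, hcard⟩
  rw [Nat.card_perm, Nat.card_fin, hcard]
end

section
/- The Okada algebra O_N(X,Y) over a field K, generated by E_1,...,E_{N−1} with relations E_i² = x_i E_i, E_i E_j = E_j E_i for |i−j| ≥ 2, and E_{i+1} E_i E_{i+1} = y_i E_{i+1}, has dimension N! for every specialization of the parameters x_1,...,x_{N−1}, y_1,...,y_{N−2} in K. -/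
/-- The defining relations of the Okada algebra on `n` generators `E_1, …, E_n`
(`i : Fin n` stands for `E_{i+1}`), with parameters `x, y : ℕ → K` (`x i` is `x_i`
and `y i` is `y_i`, `1`-indexed): `E_i² = x_i E_i`, `E_i E_j = E_j E_i` for
`|i - j| ≥ 2`, and `E_{i+1} E_i E_{i+1} = y_i E_{i+1}`. -/
inductive OkadaAlgRel (K : Type*) [CommRing K] (n : ℕ) (x y : ℕ → K) :
    FreeAlgebra K (Fin n) → FreeAlgebra K (Fin n) → Prop
  | idem (i : Fin n) :
      OkadaAlgRel K n x y (FreeAlgebra.ι K i * FreeAlgebra.ι K i)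
        (algebraMap K _ (x ((i : ℕ) + 1)) * FreeAlgebra.ι K i)
  | comm (i j : Fin n) (h : (i : ℕ) + 2 ≤ (j : ℕ)) :
      OkadaAlgRel K n x y (FreeAlgebra.ι K i * FreeAlgebra.ι K j)
        (FreeAlgebra.ι K j * FreeAlgebra.ι K i)
  | braid (i j : Fin n) (h : (j : ℕ) = (i : ℕ) + 1) :
      OkadaAlgRel K n x y (FreeAlgebra.ι K j * FreeAlgebra.ι K i * FreeAlgebra.ι K j)
        (algebraMap K _ (y ((i : ℕ) + 1)) * FreeAlgebra.ι K j)

/-- The Okada algebra `O_N(X, Y)`: the free algebra on `N - 1` generators modulo the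
Okada relations, with parameters `x_1, …, x_{N-1}` and `y_1, …, y_{N-2}` (given as
functions `ℕ → K`; only those values are used). -/
def OkadaAlgebra (K : Type*) [CommRing K] (N : ℕ) (x y : ℕ → K) :=
  RingQuot (OkadaAlgRel K (N - 1) x y)

noncomputable instance (K : Type*) [CommRing K] (N : ℕ) (x y : ℕ → K) :
    Ring (OkadaAlgebra K N x y) :=
  inferInstanceAs (Ring (RingQuot (OkadaAlgRel K (N - 1) x y)))

noncomputable instance (K : Type*) [CommRing K] (N : ℕ) (x y : ℕ → K) :
    Algebra K (OkadaAlgebra K N x y) :=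
  inferInstanceAs (Algebra K (RingQuot (OkadaAlgRel K (N - 1) x y)))

namespace Okada
variable {K : Type*} [Field K] (x y : ℕ → K)

abbrev OA (n : ℕ) : Type _ := RingQuot (OkadaAlgRel K n x y)

noncomputable def Eg (n : ℕ) (i : ℕ) : OA x y n :=
  if h : i < n then RingQuot.mkAlgHom K (OkadaAlgRel K n x y) (FreeAlgebra.ι K ⟨i, h⟩) else 0

variable {n : ℕ}

lemma Eg_idem {i : ℕ} (h : i < n) :
    Eg x y n i * Eg x y n i = x (i+1) • Eg x y n i := by
  rw [Eg, dif_pos h]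
  have := RingQuot.mkAlgHom_rel K (OkadaAlgRel.idem (K := K) (x := x) (y := y) (⟨i, h⟩ : Fin n))
  simpa [map_mul, Algebra.smul_def] using this

lemma Eg_comm {i j : ℕ} (hij : i + 2 ≤ j) (hj : j < n) :
    Eg x y n i * Eg x y n j = Eg x y n j * Eg x y n i := by
  have hi : i < n := by omega
  rw [Eg, Eg, dif_pos hi, dif_pos hj]
  have := RingQuot.mkAlgHom_rel K
    (OkadaAlgRel.comm (K := K) (x := x) (y := y) (⟨i, hi⟩ : Fin n) ⟨j, hj⟩ hij)
  simpa [map_mul] using this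

lemma Eg_braid {i : ℕ} (hi : i + 1 < n) :
    Eg x y n (i+1) * Eg x y n i * Eg x y n (i+1) = y (i+1) • Eg x y n (i+1) := by
  have h : i < n := by omega
  rw [Eg, Eg, dif_pos h, dif_pos hi]
  have := RingQuot.mkAlgHom_rel K
    (OkadaAlgRel.braid (K := K) (x := x) (y := y) (⟨i, h⟩ : Fin n) ⟨i+1, hi⟩ rfl)
  simpa [map_mul, Algebra.smul_def] using this

/-- descending product `E (p+len-1) * ⋯ * E p`. -/
noncomputable def desc (n : ℕ) (p len : ℕ) : OA x y n :=
  (((List.range' p len).reverse).map (Eg x y n)).prod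

@[simp] lemma desc_zero (p : ℕ) : desc x y n p 0 = 1 := rfl

lemma desc_succ_top (p len : ℕ) :
    desc x y n p (len+1) = Eg x y n (p+len) * desc x y n p len := by
  rw [desc, desc, List.range'_concat]
  simp [mul_comm]

lemma desc_succ_bot (p len : ℕ) :
    desc x y n p (len+1) = desc x y n (p+1) len * Eg x y n p := by
  rw [desc, desc, List.range'_succ]
  simp

lemma desc_one (p : ℕ) : desc x y n p 1 = Eg x y n p := by
  rw [desc_succ_bot]; simp

lemma desc_split (p l₁ l₂ : ℕ) :
    desc x y n p (l₁ + l₂) = desc x y n (p + l₁) l₂ * desc x y n p l₁ := by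
  induction l₂ with
  | zero => simp
  | succ l₂ ih =>
    rw [show l₁ + (l₂+1) = (l₁ + l₂) + 1 by ring, desc_succ_top, ih, desc_succ_top, mul_assoc]
    ring_nf

lemma Eg_comm_desc {m p len : ℕ} (hm : m < n) (hb : p + len ≤ n)
    (h : m + 2 ≤ p ∨ p + len + 1 ≤ m) :
    Eg x y n m * desc x y n p len = desc x y n p len * Eg x y n m := by
  induction len generalizing p with
  | zero => simp
  | succ len ih =>
    rw [desc_succ_bot]
    have h1 : Eg x y n m * Eg x y n p = Eg x y n p * Eg x y n m := by
      rcases h with h | h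
      · exact Eg_comm x y h (by omega)
      · exact (Eg_comm x y (by omega) hm).symm
    rw [← mul_assoc, ih (by omega) (by omega), mul_assoc, h1, mul_assoc]

lemma desc_comm_desc {p len r len' : ℕ} (hb : r + len' ≤ n) (h : p + len + 1 ≤ r) :
    desc x y n p len * desc x y n r len' = desc x y n r len' * desc x y n p len := by
  induction len with
  | zero => simp
  | succ len ih =>
    rw [desc_succ_top, mul_assoc, ih (by omega), ← mul_assoc, ← mul_assoc,
      Eg_comm_desc x y (by omega) hb (by omega)]

lemma ruleA {m p len : ℕ} (hm : m < n) (hb : p + len ≤ n) (h : m + 2 ≤ p) :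
    desc x y n p len * Eg x y n m = Eg x y n m * desc x y n p len :=
  (Eg_comm_desc x y hm hb (Or.inl h)).symm

lemma ruleB {m p len : ℕ} (h : p = m + 1) :
    desc x y n p len * Eg x y n m = desc x y n m (len + 1) := by
  subst h; rw [desc_succ_bot]

lemma ruleC {m len : ℕ} (hm : m < n) (hlen : 1 ≤ len) :
    desc x y n m len * Eg x y n m = x (m+1) • desc x y n m len := by
  obtain ⟨l, rfl⟩ : ∃ l, len = l + 1 := ⟨len - 1, by omega⟩
  rw [desc_succ_bot, mul_assoc, Eg_idem x y hm, mul_smul_comm]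

lemma ruleD {m p a c : ℕ} (hb : p + (a + 2 + c) ≤ n) (hm : m = p + a + 1) :
    desc x y n p (a + 2 + c) * Eg x y n m =
      y m • (desc x y n p a * desc x y n m (c + 1)) := by
  subst hm
  set m := p + a + 1 with hm
  have hmn : m + c + 1 ≤ n := by omega
  -- split : desc p (a+1+(c+1)) = desc (p+a+1) (c+1) * desc p (a+1)
  have h1 : desc x y n p (a + 2 + c) = desc x y n m (c+1) * desc x y n p (a+1) := by
    rw [show a + 2 + c = (a+1) + (c+1) by ring, desc_split, show p + (a+1) = m by omega]
  rw [h1, desc_succ_top x y p a]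
  -- now : desc m (c+1) * (Eg (p+a) * desc p a) * Eg m
  have hcomm : Eg x y n m * desc x y n p a = desc x y n p a * Eg x y n m :=
    Eg_comm_desc x y (by omega) (by omega) (by omega)
  have h2 : desc x y n m (c+1) * Eg x y n (p+a) = desc x y n (p+a) (c+2) := by
    rw [ruleB x y (show m = (p+a) + 1 by omega)]
  have h3 : desc x y n (p+a) (c+2) * Eg x y n m = y m • desc x y n m (c+1) := by
    have e1 : desc x y n (p+a) (c+2) = desc x y n (m+1) c * Eg x y n m * Eg x y n (p+a) := by
      rw [desc_succ_bot, desc_succ_bot]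
    rw [e1, mul_assoc, mul_assoc, ← mul_assoc (Eg x y n m)]
    have hbr : Eg x y n m * Eg x y n (p+a) * Eg x y n m = y m • Eg x y n m := by
      have := Eg_braid x y (show (p+a) + 1 < n by omega)
      simpa [← hm] using this
    rw [hbr, mul_smul_comm, ← desc_succ_bot]
  calc desc x y n m (c+1) * (Eg x y n (p+a) * desc x y n p a) * Eg x y n m
      = desc x y n m (c+1) * Eg x y n (p+a) * (desc x y n p a * Eg x y n m) := by
        rw [mul_assoc, mul_assoc, mul_assoc]
    _ = desc x y n (p+a) (c+2) * (Eg x y n m * desc x y n p a) := by rw [h2, hcomm]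
    _ = desc x y n (p+a) (c+2) * Eg x y n m * desc x y n p a := by rw [mul_assoc]
    _ = y m • desc x y n m (c+1) * desc x y n p a := by rw [h3, smul_mul_assoc]
    _ = y m • (desc x y n p a * desc x y n m (c+1)) := by
        rw [smul_mul_assoc,
          ← desc_comm_desc x y (p := p) (len := a) (r := m) (len' := c+1) (by omega) (by omega)]

noncomputable def coef (n m k : ℕ) : OA x y n →ₗ[K] OA x y n :=
  if m + k + 1 ≤ n then LinearMap.mulRight K (Eg x y n m)
  else if m + k = n then LinearMap.id
  else if m + k = n + 1 then x (m+1) • LinearMap.id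
  else y m • LinearMap.mulRight K (desc x y n (n+1-k) (m+k-n-2))

def tgtN (n m k : ℕ) : ℕ := if m + k = n then k+1 else if n+2 ≤ m + k then n+1-m else k

lemma tgtN_lt {n m k : ℕ} (hk : k ≤ n+1) : tgtN n m k < n + 2 := by
  unfold tgtN; split
  · omega
  · split <;> omega

noncomputable def T (n : ℕ) (m : Fin (n+1)) :
    (Fin (n+2) → OA x y n) →ₗ[K] (Fin (n+2) → OA x y n) :=
  ∑ k : Fin (n+2),
    (LinearMap.single K (fun _ : Fin (n+2) => OA x y n)
        (⟨tgtN n m k, tgtN_lt (by omega)⟩ : Fin (n+2))).comp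
      ((coef x y n m k).comp (LinearMap.proj k))

lemma T_single (m : Fin (n+1)) (k : Fin (n+2)) (b : OA x y n) :
    T x y n m (Pi.single k b) =
      Pi.single (⟨tgtN n (m:ℕ) (k:ℕ), tgtN_lt (by omega)⟩ : Fin (n+2)) (coef x y n (m:ℕ) (k:ℕ) b) := by
  rw [T, LinearMap.sum_apply]
  rw [Finset.sum_eq_single k]
  · simp
  · intro k' _ hne
    have h0 : (Pi.single k b : Fin (n+2) → OA x y n) k' = 0 := by
      rw [Pi.single_eq_of_ne hne]
    simp [LinearMap.proj_apply, h0]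
  · simp

lemma T_single_low {m : Fin (n+1)} {k : Fin (n+2)} (h : (m:ℕ) + (k:ℕ) + 1 ≤ n) (b : OA x y n) :
    T x y n m (Pi.single k b) = Pi.single k (b * Eg x y n (m:ℕ)) := by
  rw [T_single]
  have ht : (⟨tgtN n (m:ℕ) (k:ℕ), tgtN_lt (by omega)⟩ : Fin (n+2)) = k := by
    ext; simp only [tgtN]; rw [if_neg (by omega), if_neg (by omega)]
  rw [ht, coef, if_pos h]
  rfl

lemma T_single_climb {m : Fin (n+1)} {k : Fin (n+2)} (h : (m:ℕ) + (k:ℕ) = n) (b : OA x y n) :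
    T x y n m (Pi.single k b) = Pi.single (⟨(k:ℕ)+1, by omega⟩ : Fin (n+2)) b := by
  rw [T_single]
  have ht : (⟨tgtN n (m:ℕ) (k:ℕ), tgtN_lt (by omega)⟩ : Fin (n+2)) =
      (⟨(k:ℕ)+1, by omega⟩ : Fin (n+2)) := by
    ext; simp only [tgtN]; rw [if_pos h]
  rw [ht, coef, if_neg (by omega), if_pos h]
  rfl

lemma T_single_x {m : Fin (n+1)} {k : Fin (n+2)} (h : (m:ℕ) + (k:ℕ) = n+1) (b : OA x y n) :
    T x y n m (Pi.single k b) =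
      x ((m:ℕ)+1) • (Pi.single k b : Fin (n+2) → OA x y n) := by
  rw [T_single]
  have ht : (⟨tgtN n (m:ℕ) (k:ℕ), tgtN_lt (by omega)⟩ : Fin (n+2)) = k := by
    ext; simp only [tgtN]; rw [if_neg (by omega), if_neg (by omega)]
  rw [ht, coef, if_neg (by omega), if_neg (by omega), if_pos h]
  simp only [LinearMap.smul_apply, LinearMap.id_apply]
  rw [Pi.single_smul]

lemma T_single_y {m : Fin (n+1)} {k : Fin (n+2)} (h : n+2 ≤ (m:ℕ) + (k:ℕ)) (b : OA x y n) :
    T x y n m (Pi.single k b) =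
      y (m:ℕ) • (Pi.single (⟨n+1-(m:ℕ), by omega⟩ : Fin (n+2))
        (b * desc x y n (n+1-(k:ℕ)) ((m:ℕ)+(k:ℕ)-n-2)) : Fin (n+2) → OA x y n) := by
  rw [T_single]
  have ht : (⟨tgtN n (m:ℕ) (k:ℕ), tgtN_lt (by omega)⟩ : Fin (n+2)) =
      (⟨n+1-(m:ℕ), by omega⟩ : Fin (n+2)) := by
    ext; simp only [tgtN]; rw [if_neg (by omega), if_pos (by omega)]
  rw [ht, coef, if_neg (by omega), if_neg (by omega), if_neg (by omega)]
  simp only [LinearMap.smul_apply, LinearMap.mulRight_apply]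
  rw [Pi.single_smul]

lemma opR1 (m : Fin (n+1)) :
    T x y n m ∘ₗ T x y n m = x ((m:ℕ)+1) • T x y n m := by
  apply LinearMap.pi_ext
  intro k b
  simp only [LinearMap.comp_apply, LinearMap.smul_apply]
  obtain h|h|h|h : (m:ℕ)+(k:ℕ)+1 ≤ n ∨ (m:ℕ)+(k:ℕ) = n ∨ (m:ℕ)+(k:ℕ) = n+1 ∨
      n+2 ≤ (m:ℕ)+(k:ℕ) := by omega
  · rw [T_single_low x y h, T_single_low x y h, mul_assoc,
      Eg_idem x y (show (m:ℕ) < n by omega), mul_smul_comm, Pi.single_smul]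
  · rw [T_single_climb x y h,
      T_single_x x y (k := ⟨(k:ℕ)+1, by omega⟩) (show (m:ℕ)+((k:ℕ)+1) = n+1 by omega)]
  · rw [T_single_x x y h, map_smul, T_single_x x y h]
  · rw [T_single_y x y h, map_smul,
      T_single_x x y (k := ⟨n+1-(m:ℕ), by omega⟩) (show (m:ℕ)+(n+1-(m:ℕ)) = n+1 by omega),
      smul_comm]

lemma opComm (i j : Fin (n+1)) (hij : (i:ℕ)+2 ≤ (j:ℕ)) :
    T x y n i ∘ₗ T x y n j = T x y n j ∘ₗ T x y n i := by
  apply LinearMap.pi_ext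
  intro k b
  simp only [LinearMap.comp_apply]
  obtain h|h|h|h : (j:ℕ)+(k:ℕ)+1 ≤ n ∨ (j:ℕ)+(k:ℕ) = n ∨ (j:ℕ)+(k:ℕ) = n+1 ∨
      n+2 ≤ (j:ℕ)+(k:ℕ) := by omega
  · rw [T_single_low x y h b,
      T_single_low x y (show (i:ℕ)+(k:ℕ)+1 ≤ n by omega) (b * Eg x y n (j:ℕ)),
      T_single_low x y (show (i:ℕ)+(k:ℕ)+1 ≤ n by omega) b,
      T_single_low x y h (b * Eg x y n (i:ℕ)),
      mul_assoc, mul_assoc, Eg_comm x y hij (show (j:ℕ) < n by omega)]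
  · rw [T_single_climb x y h b,
      T_single_low x y (k := ⟨(k:ℕ)+1, by omega⟩)
        (show (i:ℕ)+((k:ℕ)+1)+1 ≤ n by omega) b,
      T_single_low x y (show (i:ℕ)+(k:ℕ)+1 ≤ n by omega) b,
      T_single_climb x y h (b * Eg x y n (i:ℕ))]
  · rw [T_single_x x y h b, map_smul,
      T_single_low x y (show (i:ℕ)+(k:ℕ)+1 ≤ n by omega) b,
      T_single_x x y h (b * Eg x y n (i:ℕ))]
  · rw [T_single_y x y h b, map_smul,
      T_single_low x y (k := ⟨n+1-(j:ℕ), by omega⟩)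
        (show (i:ℕ)+(n+1-(j:ℕ))+1 ≤ n by omega)
        (b * desc x y n (n+1-(k:ℕ)) ((j:ℕ)+(k:ℕ)-n-2))]
    obtain hi|hi|hi|hi : (i:ℕ)+(k:ℕ)+1 ≤ n ∨ (i:ℕ)+(k:ℕ) = n ∨ (i:ℕ)+(k:ℕ) = n+1 ∨
        n+2 ≤ (i:ℕ)+(k:ℕ) := by omega
    · -- 4a
      rw [T_single_low x y hi b, T_single_y x y h (b * Eg x y n (i:ℕ))]
      congr 2
      rw [mul_assoc, mul_assoc,
        Eg_comm_desc x y (show (i:ℕ) < n by omega)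
          (show (n+1-(k:ℕ)) + ((j:ℕ)+(k:ℕ)-n-2) ≤ n by omega) (by omega)]
    · -- 4b
      rw [T_single_climb x y hi b,
        T_single_y x y (k := ⟨(k:ℕ)+1, by omega⟩)
          (show n+2 ≤ (j:ℕ)+((k:ℕ)+1) by omega) b]
      congr 2
      rw [mul_assoc, ruleB x y (show n+1-(k:ℕ) = (i:ℕ)+1 by omega),
        show n+1-((k:ℕ)+1) = (i:ℕ) by omega,
        show (j:ℕ)+((k:ℕ)+1)-n-2 = ((j:ℕ)+(k:ℕ)-n-2)+1 by omega]
    · -- 4c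
      rw [T_single_x x y hi b, map_smul, T_single_y x y h b,
        show n+1-(k:ℕ) = (i:ℕ) by omega,
        mul_assoc, ruleC x y (show (i:ℕ) < n by omega) (by omega),
        mul_smul_comm, Pi.single_smul, smul_comm]
    · -- 4d
      rw [T_single_y x y hi b, map_smul,
        T_single_y x y (k := ⟨n+1-(i:ℕ), by omega⟩)
          (show n+2 ≤ (j:ℕ)+(n+1-(i:ℕ)) by omega)
          (b * desc x y n (n+1-(k:ℕ)) ((i:ℕ)+(k:ℕ)-n-2))]
      have key : b * desc x y n (n+1-(k:ℕ)) ((j:ℕ)+(k:ℕ)-n-2) * Eg x y n (i:ℕ) =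
          y (i:ℕ) • (b * desc x y n (n+1-(k:ℕ)) ((i:ℕ)+(k:ℕ)-n-2) *
            desc x y n (n+1-(n+1-(i:ℕ))) ((j:ℕ)+(n+1-(i:ℕ))-n-2)) := by
        rw [show n+1-(n+1-(i:ℕ)) = (i:ℕ) by omega,
          show (j:ℕ)+(n+1-(i:ℕ))-n-2 = ((j:ℕ)-(i:ℕ)-2)+1 by omega,
          show (j:ℕ)+(k:ℕ)-n-2 = ((i:ℕ)+(k:ℕ)-n-2) + 2 + ((j:ℕ)-(i:ℕ)-2) by omega,
          mul_assoc b,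
          ruleD x y (show (n+1-(k:ℕ)) + (((i:ℕ)+(k:ℕ)-n-2) + 2 + ((j:ℕ)-(i:ℕ)-2)) ≤ n by omega)
            (show (i:ℕ) = (n+1-(k:ℕ)) + ((i:ℕ)+(k:ℕ)-n-2) + 1 by omega),
          mul_smul_comm, mul_assoc]
      rw [key, Pi.single_smul, smul_comm]

set_option maxHeartbeats 2000000 in
lemma opBraid (i j : Fin (n+1)) (hj : (j:ℕ) = (i:ℕ)+1) :
    T x y n j ∘ₗ (T x y n i ∘ₗ T x y n j) = y ((i:ℕ)+1) • T x y n j := by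
  have hjn := j.isLt
  apply LinearMap.pi_ext
  intro k b
  have hkn := k.isLt
  simp only [LinearMap.comp_apply, LinearMap.smul_apply]
  obtain h|h|h|h : (j:ℕ)+(k:ℕ)+1 ≤ n ∨ (j:ℕ)+(k:ℕ) = n ∨ (j:ℕ)+(k:ℕ) = n+1 ∨
      n+2 ≤ (j:ℕ)+(k:ℕ) := by omega
  · -- all low
    rw [T_single_low x y h b,
      T_single_low x y (show (i:ℕ)+(k:ℕ)+1 ≤ n by omega) (b * Eg x y n (j:ℕ)),
      T_single_low x y h (b * Eg x y n (j:ℕ) * Eg x y n (i:ℕ))]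
    have key : b * Eg x y n (j:ℕ) * Eg x y n (i:ℕ) * Eg x y n (j:ℕ) =
        y ((i:ℕ)+1) • (b * Eg x y n (j:ℕ)) := by
      rw [hj, mul_assoc b, mul_assoc b, Eg_braid x y (show (i:ℕ)+1 < n by omega),
        mul_smul_comm]
    rw [key, Pi.single_smul]
  · -- climb twice then y
    rw [T_single_climb x y h b,
      T_single_climb x y (k := ⟨(k:ℕ)+1, by omega⟩)
        (show (i:ℕ)+((k:ℕ)+1) = n by omega) b,
      T_single_y x y (k := ⟨(k:ℕ)+1+1, by omega⟩)
        (show n+2 ≤ (j:ℕ)+((k:ℕ)+1+1) by omega) b,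
      show (j:ℕ)+((k:ℕ)+1+1)-n-2 = 0 by omega, desc_zero, mul_one,
      show (⟨n+1-(j:ℕ), by omega⟩ : Fin (n+2)) = (⟨(k:ℕ)+1, by omega⟩ : Fin (n+2))
        from Fin.ext (show n+1-(j:ℕ) = (k:ℕ)+1 by omega),
      show y (j:ℕ) = y ((i:ℕ)+1) from by rw [hj]]
  · -- x then climb then y
    rw [T_single_x x y h b, map_smul, map_smul,
      T_single_climb x y (show (i:ℕ)+(k:ℕ) = n by omega) b,
      T_single_y x y (k := ⟨(k:ℕ)+1, by omega⟩)
        (show n+2 ≤ (j:ℕ)+((k:ℕ)+1) by omega) b,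
      show (j:ℕ)+((k:ℕ)+1)-n-2 = 0 by omega, desc_zero, mul_one,
      show (⟨n+1-(j:ℕ), by omega⟩ : Fin (n+2)) = k
        from Fin.ext (show n+1-(j:ℕ) = (k:ℕ) by omega), hj,
      smul_comm]
  · -- y then climb then y
    rw [T_single_y x y h b, map_smul, map_smul,
      T_single_climb x y (k := ⟨n+1-(j:ℕ), by omega⟩)
        (show (i:ℕ)+(n+1-(j:ℕ)) = n by omega)
        (b * desc x y n (n+1-(k:ℕ)) ((j:ℕ)+(k:ℕ)-n-2)),
      T_single_y x y (k := ⟨n+1-(j:ℕ)+1, by omega⟩)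
        (show n+2 ≤ (j:ℕ)+(n+1-(j:ℕ)+1) by omega)
        (b * desc x y n (n+1-(k:ℕ)) ((j:ℕ)+(k:ℕ)-n-2)),
      show (j:ℕ)+(n+1-(j:ℕ)+1)-n-2 = 0 by omega, desc_zero, mul_one,
      show y (j:ℕ) = y ((i:ℕ)+1) from by rw [hj]]

open MulOpposite in
noncomputable def F (n : ℕ) :
    OA x y (n+1) →ₐ[K] (Module.End K (Fin (n+2) → OA x y n))ᵐᵒᵖ :=
  RingQuot.liftAlgHom K ⟨FreeAlgebra.lift K (fun i : Fin (n+1) => op (T x y n i)), by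
    rintro a b h
    cases h with
    | idem i =>
      simp only [map_mul, AlgHom.commutes, FreeAlgebra.lift_ι_apply]
      apply unop_injective
      simp only [unop_mul, unop_op, MulOpposite.algebraMap_apply, unop_op]
      rw [← Algebra.commutes, ← Algebra.smul_def, Module.End.mul_eq_comp, opR1]
    | comm i j hij =>
      simp only [map_mul, FreeAlgebra.lift_ι_apply]
      apply unop_injective
      simp only [unop_mul, unop_op]
      rw [Module.End.mul_eq_comp, Module.End.mul_eq_comp, opComm x y i j hij]
    | braid i j hj =>
      simp only [map_mul, AlgHom.commutes, FreeAlgebra.lift_ι_apply]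
      apply unop_injective
      simp only [unop_mul, unop_op, MulOpposite.algebraMap_apply]
      rw [← Algebra.commutes, ← Algebra.smul_def, Module.End.mul_eq_comp,
        Module.End.mul_eq_comp, opBraid x y i j hj]⟩

lemma F_Eg {m : ℕ} (hm : m < n+1) :
    F x y n (Eg x y (n+1) m) = MulOpposite.op (T x y n ⟨m, hm⟩) := by
  rw [Eg, dif_pos hm, F, RingQuot.liftAlgHom_mkAlgHom_apply, FreeAlgebra.lift_ι_apply]

noncomputable def ιh (n : ℕ) : OA x y n →ₐ[K] OA x y (n+1) :=
  RingQuot.liftAlgHom K ⟨FreeAlgebra.lift K (fun i : Fin n => Eg x y (n+1) (i:ℕ)), by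
    rintro a b h
    cases h with
    | idem i =>
      simp only [map_mul, AlgHom.commutes, FreeAlgebra.lift_ι_apply]
      rw [Eg_idem x y (show (i:ℕ) < n+1 by omega), Algebra.smul_def]
    | comm i j hij =>
      simp only [map_mul, FreeAlgebra.lift_ι_apply]
      exact Eg_comm x y hij (show (j:ℕ) < n+1 by omega)
    | braid i j hj =>
      simp only [map_mul, AlgHom.commutes, FreeAlgebra.lift_ι_apply]
      rw [hj, Eg_braid x y (show (i:ℕ)+1 < n+1 by omega), Algebra.smul_def]⟩

lemma ιh_Eg {i : ℕ} (hi : i < n) : ιh x y n (Eg x y n i) = Eg x y (n+1) i := by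
  rw [Eg, dif_pos hi, ιh, RingQuot.liftAlgHom_mkAlgHom_apply, FreeAlgebra.lift_ι_apply]

lemma ιh_desc {p len : ℕ} (h : p + len ≤ n) :
    ιh x y n (desc x y n p len) = desc x y (n+1) p len := by
  induction len with
  | zero => simp
  | succ len ih =>
    rw [desc_succ_top, map_mul, ih (by omega), ιh_Eg x y (by omega), ← desc_succ_top]

noncomputable def u (n k : ℕ) : OA x y (n+1) := desc x y (n+1) (n+1-k) k

lemma u_zero : u x y n 0 = 1 := rfl

lemma u_succ {k : ℕ} (hk : k ≤ n) :
    u x y n (k+1) = u x y n k * Eg x y (n+1) (n-k) := by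
  rw [u, u, show n+1-(k+1) = n-k by omega, desc_succ_bot, show n-k+1 = n+1-k by omega]

lemma adjoin_top (ν : ℕ) :
    Algebra.adjoin K (Set.range (fun i : Fin ν => Eg x y ν (i:ℕ))) = ⊤ := by
  rw [eq_top_iff]
  rintro z -
  obtain ⟨w, rfl⟩ := RingQuot.mkAlgHom_surjective K (OkadaAlgRel K ν x y) z
  induction w using FreeAlgebra.induction with
  | grade0 r => rw [AlgHom.commutes]; exact algebraMap_mem _ r
  | grade1 i =>
    refine Algebra.subset_adjoin ⟨i, ?_⟩
    show Eg x y ν (i:ℕ) = _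
    rw [Eg, dif_pos i.isLt, Fin.eta]
  | mul a b ha hb => rw [map_mul]; exact mul_mem ha hb
  | add a b ha hb => rw [map_add]; exact add_mem ha hb

lemma F_u {k : ℕ} (hk : k ≤ n+1) (b : OA x y n) :
    (F x y n (u x y n k)).unop (Pi.single (0 : Fin (n+2)) b) =
      Pi.single (⟨k, by omega⟩ : Fin (n+2)) b := by
  induction k with
  | zero =>
    rw [u_zero, map_one, MulOpposite.unop_one, Module.End.one_apply,
      show (⟨0, by omega⟩ : Fin (n+2)) = 0 from Fin.ext (by simp)]
  | succ k ih =>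
    rw [u_succ x y (by omega), map_mul, MulOpposite.unop_mul, Module.End.mul_apply,
      ih (by omega), F_Eg x y (show n-k < n+1 by omega), MulOpposite.unop_op,
      T_single_climb x y (m := ⟨n-k, by omega⟩) (k := ⟨k, by omega⟩)
        (show (n-k)+k = n by omega) b]

lemma F_ιh (b : OA x y n) : ∀ c : OA x y n,
    (F x y n (ιh x y n b)).unop (Pi.single (0 : Fin (n+2)) c) =
      Pi.single (0 : Fin (n+2)) (c * b) := by
  have hb : b ∈ Algebra.adjoin K (Set.range (fun i : Fin n => Eg x y n (i:ℕ))) := by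
    rw [adjoin_top]; trivial
  induction hb using Algebra.adjoin_induction with
  | mem g hg =>
    obtain ⟨i, rfl⟩ := hg
    intro c
    have hi := i.isLt
    show (F x y n (ιh x y n (Eg x y n (i:ℕ)))).unop _ = _
    rw [ιh_Eg x y hi, F_Eg x y (show (i:ℕ) < n+1 by omega), MulOpposite.unop_op,
      T_single_low x y (m := ⟨(i:ℕ), by omega⟩) (k := 0)
        (show (i:ℕ) + ((0 : Fin (n+2)):ℕ) + 1 ≤ n by simp only [Fin.val_zero]; omega) c]
  | algebraMap r =>
    intro c
    rw [AlgHom.commutes, AlgHom.commutes, MulOpposite.algebraMap_apply, MulOpposite.unop_op,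
      Module.algebraMap_end_apply, ← Algebra.commutes r c, ← Algebra.smul_def, Pi.single_smul]
  | add a b _ _ ha hb =>
    intro c
    rw [map_add, map_add, MulOpposite.unop_add, LinearMap.add_apply, ha, hb, mul_add,
      Pi.single_add]
  | mul a b _ _ ha hb =>
    intro c
    rw [map_mul, map_mul, MulOpposite.unop_mul, Module.End.mul_apply, ha, hb, mul_assoc]

noncomputable def φ (n : ℕ) : OA x y (n+1) →ₗ[K] (Fin (n+2) → OA x y n) where
  toFun z := (F x y n z).unop (Pi.single 0 1)
  map_add' a b := by simp only [map_add, MulOpposite.unop_add, LinearMap.add_apply]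
  map_smul' c a := by simp only [map_smul, MulOpposite.unop_smul, LinearMap.smul_apply,
    RingHom.id_apply]

lemma φ_apply (b : OA x y n) {k : ℕ} (hk : k ≤ n+1) :
    φ x y n (ιh x y n b * u x y n k) = Pi.single (⟨k, by omega⟩ : Fin (n+2)) b := by
  show (F x y n _).unop _ = _
  rw [map_mul, MulOpposite.unop_mul, Module.End.mul_apply, F_ιh x y b 1, one_mul, F_u x y hk b]

noncomputable def χ (n : ℕ) : (Fin (n+2) → OA x y n) →ₗ[K] OA x y (n+1) :=
  ∑ k : Fin (n+2), (LinearMap.mulRight K (u x y n (k:ℕ))).comp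
    ((ιh x y n).toLinearMap.comp (LinearMap.proj k))

lemma χ_single (k : Fin (n+2)) (b : OA x y n) :
    χ x y n (Pi.single k b) = ιh x y n b * u x y n (k:ℕ) := by
  rw [χ, LinearMap.sum_apply, Finset.sum_eq_single k]
  · simp
  · intro k' _ hne
    have h0 : (Pi.single k b : Fin (n+2) → OA x y n) k' = 0 := by rw [Pi.single_eq_of_ne hne]
    simp [LinearMap.proj_apply, h0]
  · simp

def S (n : ℕ) : Set (OA x y (n+1)) :=
  {z | ∃ (b : OA x y n) (k : ℕ), k ≤ n+1 ∧ z = ιh x y n b * u x y n k}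

lemma mul_Eg_mem (b : OA x y n) {k m : ℕ} (hk : k ≤ n+1) (hm : m < n+1) :
    ιh x y n b * u x y n k * Eg x y (n+1) m ∈ Submodule.span K (S x y n) := by
  rw [mul_assoc]
  obtain h|h|h|h : m+k+1 ≤ n ∨ m+k = n ∨ m+k = n+1 ∨ n+2 ≤ m+k := by omega
  · rw [u, ← Eg_comm_desc x y hm (show (n+1-k) + k ≤ n+1 by omega) (Or.inl (by omega)),
      ← mul_assoc, ← ιh_Eg x y (show m < n by omega), ← map_mul]
    exact Submodule.subset_span ⟨b * Eg x y n m, k, by omega, by rw [u]⟩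
  · rw [u, ruleB x y (show n+1-k = m+1 by omega)]
    exact Submodule.subset_span ⟨b, k+1, by omega,
      by rw [u, show n+1-(k+1) = m by omega]⟩
  · rw [u, show n+1-k = m by omega, ruleC x y (show m < n+1 from hm) (by omega), mul_smul_comm]
    exact Submodule.smul_mem _ _ (Submodule.subset_span
      ⟨b, k, by omega, by rw [u, show n+1-k = m by omega]⟩)
  · obtain ⟨a, ha⟩ : ∃ a, m = (n+1-k)+a+1 := ⟨m+k-n-2, by omega⟩
    obtain ⟨c, hc⟩ : ∃ c, k = a+2+c := ⟨k-a-2, by omega⟩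
    rw [u, hc,
      ruleD x y (show (n+1-(a+2+c)) + (a+2+c) ≤ n+1 by omega)
        (show m = (n+1-(a+2+c))+a+1 by omega),
      mul_smul_comm]
    refine Submodule.smul_mem _ _ ?_
    rw [← ιh_desc x y (show (n+1-(a+2+c)) + a ≤ n by omega), ← mul_assoc, ← map_mul]
    exact Submodule.subset_span ⟨b * desc x y n (n+1-(a+2+c)) a, c+1, by omega,
      by rw [u, show n+1-(c+1) = m by omega]⟩

lemma span_S_top : Submodule.span K (S x y n) = ⊤ := by
  rw [eq_top_iff]
  rintro z -
  have hmain : ∀ (a : OA x y (n+1)), ∀ v ∈ Submodule.span K (S x y n),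
      v * a ∈ Submodule.span K (S x y n) := by
    intro a
    have ha : a ∈ Algebra.adjoin K (Set.range (fun i : Fin (n+1) => Eg x y (n+1) (i:ℕ))) := by
      rw [adjoin_top]; trivial
    induction ha using Algebra.adjoin_induction with
    | mem g hg =>
      obtain ⟨i, rfl⟩ := hg
      intro v hv
      induction hv using Submodule.span_induction with
      | mem s hs =>
        obtain ⟨b, k, hk, rfl⟩ := hs
        exact mul_Eg_mem x y b hk i.isLt
      | zero => rw [zero_mul]; exact Submodule.zero_mem _
      | add v w _ _ hv hw => rw [add_mul]; exact Submodule.add_mem _ hv hw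
      | smul c v _ hv => rw [smul_mul_assoc]; exact Submodule.smul_mem _ _ hv
    | algebraMap r =>
      intro v hv
      rw [← Algebra.commutes r v, ← Algebra.smul_def]
      exact Submodule.smul_mem _ _ hv
    | add a b _ _ ha hb =>
      intro v hv
      rw [mul_add]
      exact Submodule.add_mem _ (ha v hv) (hb v hv)
    | mul a b _ _ ha hb =>
      intro v hv
      rw [← mul_assoc]
      exact hb _ (ha v hv)
  have h1 : (1 : OA x y (n+1)) ∈ Submodule.span K (S x y n) :=
    Submodule.subset_span ⟨1, 0, by omega, by rw [u_zero, map_one, one_mul]⟩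
  simpa using hmain z 1 h1

lemma phi_chi : (φ x y n).comp (χ x y n) = LinearMap.id := by
  apply LinearMap.pi_ext
  intro k b
  rw [LinearMap.comp_apply, χ_single, φ_apply x y b (show (k:ℕ) ≤ n+1 by omega),
    LinearMap.id_apply, Fin.eta]

lemma chi_phi : (χ x y n).comp (φ x y n) = LinearMap.id := by
  apply LinearMap.ext_on (span_S_top x y (n := n))
  rintro z ⟨b, k, hk, rfl⟩
  rw [LinearMap.comp_apply, φ_apply x y b hk, χ_single, LinearMap.id_apply]

noncomputable def stepEquiv (n : ℕ) : OA x y (n+1) ≃ₗ[K] (Fin (n+2) → OA x y n) :=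
  LinearEquiv.ofLinear (φ x y n) (χ x y n) (phi_chi x y) (chi_phi x y)

noncomputable def e0 : OA x y 0 →ₐ[K] K :=
  RingQuot.liftAlgHom K ⟨FreeAlgebra.lift K (fun _ : Fin 0 => (0:K)), by
    rintro a b h
    cases h with
    | idem i => exact i.elim0
    | comm i j _ => exact i.elim0
    | braid i j _ => exact i.elim0⟩

lemma e0_inv : ∀ z : OA x y 0, algebraMap K (OA x y 0) (e0 x y z) = z := by
  intro z
  obtain ⟨w, rfl⟩ := RingQuot.mkAlgHom_surjective K _ z
  induction w using FreeAlgebra.induction with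
  | grade0 r => simp [AlgHom.commutes]
  | grade1 i => exact i.elim0
  | mul a b ha hb => rw [map_mul, map_mul, map_mul, ha, hb]
  | add a b ha hb => rw [map_add, map_add, map_add, ha, hb]

noncomputable def equiv0 : OA x y 0 ≃ₗ[K] K :=
  LinearEquiv.ofLinear (e0 x y).toLinearMap (Algebra.linearMap K (OA x y 0))
    (by
      apply LinearMap.ext
      intro c
      simp [AlgHom.commutes])
    (by
      apply LinearMap.ext
      intro z
      simp only [LinearMap.comp_apply, Algebra.linearMap_apply, AlgHom.toLinearMap_apply,
        LinearMap.id_apply]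
      exact e0_inv x y z)

lemma finite_and_finrank (n : ℕ) : Module.Finite K (OA x y n) ∧
    Module.finrank K (OA x y n) = (n+1).factorial := by
  induction n with
  | zero =>
    refine ⟨Module.Finite.equiv (equiv0 x y).symm, ?_⟩
    rw [(equiv0 x y).finrank_eq, Module.finrank_self]
    rfl
  | succ n ih =>
    obtain ⟨hfin, hrank⟩ := ih
    have e := stepEquiv x y n
    haveI := hfin
    refine ⟨Module.Finite.equiv e.symm, ?_⟩
    rw [e.finrank_eq, Module.finrank_pi_fintype, Finset.sum_const, Finset.card_univ,
      Fintype.card_fin, smul_eq_mul, hrank]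
    exact (Nat.factorial_succ (n+1)).symm

end Okada

/-- For every field `K` and every specialization of the parameters, the Okada algebra
`O_N(X, Y)` has dimension `N!` over `K`. -/
theorem okadaAlgebra_finrank (K : Type*) [Field K] (N : ℕ) (x y : ℕ → K) :
    Module.finrank K (OkadaAlgebra K N x y) = N.factorial := by
  cases N with
  | zero =>
    show Module.finrank K (Okada.OA x y 0) = Nat.factorial 0
    simpa using (Okada.finite_and_finrank x y 0).2
  | succ n =>
    show Module.finrank K (Okada.OA x y n) = Nat.factorial (n+1)
    exact (Okada.finite_and_finrank x y n).2
end

section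
/- For any Okada half arc-diagram H of rank N, the propagating label set PropLab(H) (the set of height labels of its propagating half arcs) is a Fibonacci set of rank N. -/
/-- An Okada half arc-diagram of rank `N`: a non-crossing partial matching of the points
`{1, …, N}` (`pair a = a` meaning the point `a` carries a propagating half arc, and
`pair a = b ≠ a` meaning a full arc `{a, b}`), together with height labels.  Each arc's
height is at least `1`, at most its minimal endpoint, of the same parity as that minimal
endpoint, and heights strictly increase under nesting (a full arc is nested in a full
arc surrounding it; any arc strictly to the right of a half arc is nested in it;
no half arc point may lie strictly inside a full arc). -/
structure OkadaHalfDiagram (N : ℕ) where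
  pair : ℕ → ℕ
  height : ℕ → ℕ
  pair_mem : ∀ a ∈ Finset.Icc 1 N, pair a ∈ Finset.Icc 1 N
  pair_invol : ∀ a ∈ Finset.Icc 1 N, pair (pair a) = a
  noncross : ∀ a b, a ∈ Finset.Icc 1 N → b ∈ Finset.Icc 1 N →
    a < pair a → b < pair b → ¬(a < b ∧ b < pair a ∧ pair a < pair b)
  half_not_inside : ∀ a c, a ∈ Finset.Icc 1 N → c ∈ Finset.Icc 1 N →
    pair a = a → c < pair c → ¬(c < a ∧ a < pair c)
  height_pos : ∀ a ∈ Finset.Icc 1 N, 1 ≤ height a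
  height_le : ∀ a ∈ Finset.Icc 1 N, height a ≤ min a (pair a)
  height_parity : ∀ a ∈ Finset.Icc 1 N, height a % 2 = (min a (pair a)) % 2
  height_pair : ∀ a ∈ Finset.Icc 1 N, height (pair a) = height a
  nested_full_full : ∀ a c, a ∈ Finset.Icc 1 N → c ∈ Finset.Icc 1 N →
    a < pair a → c < pair c → c < a → pair a < pair c → height c < height a
  nested_half_half : ∀ a c, a ∈ Finset.Icc 1 N → c ∈ Finset.Icc 1 N →
    pair a = a → pair c = c → c < a → height c < height a
  nested_full_half : ∀ a c, a ∈ Finset.Icc 1 N → c ∈ Finset.Icc 1 N →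
    a < pair a → pair c = c → c < a → height c < height a

/-- The propagating label set of an Okada half arc-diagram: the set of height labels of
its propagating half arcs. -/
def propLab {N : ℕ} (H : OkadaHalfDiagram N) : Finset ℕ :=
  ((Finset.Icc 1 N).filter (fun a => H.pair a = a)).image H.height

/-! The heights of the half-arc points increase from left to right, so the `ℓ`-th smallest
propagating label is the height of the `ℓ`-th half-arc point `a`, and it has the parity of `a`.
No full arc straddles a half-arc point, so the points left of `a` that carry full arcs are
matched among themselves; hence `ℓ - 1`, the number of half-arc points left of `a`, has the
parity of `a - 1`. Counting all points in the same way gives `|PropLab H| ≡ N (mod 2)`. -/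

open Finset

theorem Finset.even_card_of_involution {α : Type*} (s : Finset α) (f : α → α)
    (hmem : ∀ a ∈ s, f a ∈ s) (hinv : ∀ a ∈ s, f (f a) = a) (hne : ∀ a ∈ s, f a ≠ a) :
    Even #s := by
  have hsum : ∑ _a ∈ s, (1 : ZMod 2) = 0 :=
    sum_involution (fun a _ => f a) (fun _ _ => by decide) (fun a ha _ => hne a ha) hmem hinv
  rw [sum_const, nsmul_one] at hsum
  exact (ZMod.natCast_eq_zero_iff_even).1 hsum

theorem Finset.card_filter_lt_sort_getElem {α : Type*} [LinearOrder α] (s : Finset α) (i : ℕ)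
    (hi : i < (s.sort (· ≤ ·)).length) :
    #{y ∈ s | y < (s.sort (· ≤ ·))[i]} = i := by
  set e := s.orderEmbOfFin rfl
  have hi' : i < #s := by simpa using hi
  have hei : (s.sort (· ≤ ·))[i] = e ⟨i, hi'⟩ := (s.orderEmbOfFin_apply rfl ⟨i, hi'⟩).symm
  have hcard : #{y ∈ univ.image e | y < e ⟨i, hi'⟩} = i := by
    rw [filter_image, card_image_of_injective _ e.injective]
    simp only [OrderEmbedding.lt_iff_lt]
    rw [filter_gt_eq_Iio, Fin.card_Iio]
  rwa [s.image_orderEmbOfFin_univ rfl, ← hei] at hcard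

theorem card_filter_image_lt_of_strictMonoOn {α β : Type*} [LinearOrder α] [LinearOrder β]
    {s : Finset α} {g : α → β} (hg : StrictMonoOn g s) {a : α} (ha : a ∈ s) :
    #{y ∈ s.image g | y < g a} = #{b ∈ s | b < a} := by
  rw [filter_image, card_image_of_injOn (hg.injOn.mono (filter_subset _ _))]
  congr 1
  exact filter_congr fun b hb => hg.lt_iff_lt hb ha

theorem isFibSet_of_mod_two_eq_card_filter_lt {N : ℕ} {S : Finset ℕ} (hS : S ⊆ Icc 1 N)
    (hcard : #S % 2 = N % 2) (hrank : ∀ x ∈ S, x % 2 = (#{y ∈ S | y < x} + 1) % 2) :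
    IsFibSet N S := by
  refine ⟨hS, hcard, fun i hi => ?_⟩
  have hi' : i < (S.sort (· ≤ ·)).length := by rwa [length_sort]
  rw [List.getD_eq_getElem _ _ hi', hrank _ ((mem_sort _).1 (List.getElem_mem hi')),
    S.card_filter_lt_sort_getElem i hi']

namespace OkadaHalfDiagram

variable {N : ℕ} (H : OkadaHalfDiagram N)

def halfPoints : Finset ℕ := {a ∈ Icc 1 N | H.pair a = a}

def fullPoints : Finset ℕ := {a ∈ Icc 1 N | H.pair a ≠ a}

theorem propLab_eq_image : propLab H = H.halfPoints.image H.height := rfl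

variable {H}

theorem mem_halfPoints {a : ℕ} : a ∈ H.halfPoints ↔ a ∈ Icc 1 N ∧ H.pair a = a := mem_filter

theorem mem_fullPoints {a : ℕ} : a ∈ H.fullPoints ↔ a ∈ Icc 1 N ∧ H.pair a ≠ a := mem_filter

theorem height_strictMonoOn : StrictMonoOn H.height H.halfPoints := fun c hc a ha hca =>
  H.nested_half_half a c (mem_halfPoints.1 ha).1 (mem_halfPoints.1 hc).1
    (mem_halfPoints.1 ha).2 (mem_halfPoints.1 hc).2 hca

theorem height_mem_Icc {a : ℕ} (ha : a ∈ H.halfPoints) : H.height a ∈ Icc 1 N := by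
  obtain ⟨haI, hfix⟩ := mem_halfPoints.1 ha
  have hle := H.height_le a haI
  rw [hfix, min_self] at hle
  exact mem_Icc.2 ⟨H.height_pos a haI, hle.trans (mem_Icc.1 haI).2⟩

theorem height_mod_two {a : ℕ} (ha : a ∈ H.halfPoints) : H.height a % 2 = a % 2 := by
  obtain ⟨haI, hfix⟩ := mem_halfPoints.1 ha
  simpa [hfix] using H.height_parity a haI

theorem pair_mem_fullPoints {b : ℕ} (hb : b ∈ H.fullPoints) : H.pair b ∈ H.fullPoints := by
  obtain ⟨hbI, hne⟩ := mem_fullPoints.1 hb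
  exact mem_fullPoints.2 ⟨H.pair_mem b hbI, fun h => hne (h.symm.trans (H.pair_invol b hbI))⟩

theorem pair_lt_of_lt_mem_halfPoints {b c : ℕ} (hbI : b ∈ Icc 1 N) (hc : c ∈ H.halfPoints)
    (hbc : b < c) : H.pair b < c := by
  obtain ⟨hcI, hfix⟩ := mem_halfPoints.1 hc
  by_contra! hcb
  have hpc : H.pair b ≠ c := fun h => by
    have := H.pair_invol b hbI
    rw [h, hfix] at this
    omega
  exact H.half_not_inside c b hcI hbI hfix (by omega) ⟨hbc, by omega⟩

theorem even_card_filter_fullPoints (p : ℕ → Prop) [DecidablePred p]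
    (hp : ∀ b ∈ H.fullPoints, p b → p (H.pair b)) : Even #{b ∈ H.fullPoints | p b} := by
  refine even_card_of_involution _ H.pair (fun b hb => ?_) (fun b hb => ?_) (fun b hb => ?_)
  · obtain ⟨hbF, hpb⟩ := mem_filter.1 hb
    exact mem_filter.2 ⟨pair_mem_fullPoints hbF, hp b hbF hpb⟩
  · exact H.pair_invol b (mem_fullPoints.1 (mem_filter.1 hb).1).1
  · exact (mem_fullPoints.1 (mem_filter.1 hb).1).2

theorem card_filter_halfPoints_add_card_filter_fullPoints (p : ℕ → Prop) [DecidablePred p] :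
    #{a ∈ H.halfPoints | p a} + #{a ∈ H.fullPoints | p a} = #{a ∈ Icc 1 N | p a} := by
  rw [halfPoints, fullPoints, filter_comm, filter_comm (p := fun a => H.pair a ≠ a)]
  exact card_filter_add_card_filter_not _

theorem card_halfPoints_mod_two : #H.halfPoints % 2 = N % 2 := by
  have hsplit := H.card_filter_halfPoints_add_card_filter_fullPoints (fun _ => True)
  obtain ⟨m, hm⟩ := H.even_card_filter_fullPoints (fun _ => True) (fun _ _ _ => trivial)
  simp only [filter_true, Nat.card_Icc] at hsplit hm
  omega

theorem card_filter_halfPoints_lt_mod_two {a : ℕ} (ha : a ∈ H.halfPoints) :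
    (#{b ∈ H.halfPoints | b < a} + 1) % 2 = a % 2 := by
  have hsplit := H.card_filter_halfPoints_add_card_filter_fullPoints (· < a)
  obtain ⟨m, hm⟩ := H.even_card_filter_fullPoints (· < a)
    fun b hb hba => pair_lt_of_lt_mem_halfPoints (mem_fullPoints.1 hb).1 ha hba
  have hIcc : #{b ∈ Icc 1 N | b < a} = a - 1 := by
    rw [← Nat.card_Ico]
    congr 1
    ext b
    simp only [mem_filter, mem_Icc, mem_Ico]
    have := (mem_Icc.1 (mem_halfPoints.1 ha).1).2
    omega
  have ha1 := (mem_Icc.1 (mem_halfPoints.1 ha).1).1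
  omega

end OkadaHalfDiagram

open OkadaHalfDiagram in
/-- The propagating label set of any Okada half arc-diagram of rank `N` is a Fibonacci
set of rank `N`. -/
theorem propLab_isFibSet (N : ℕ) (H : OkadaHalfDiagram N) : IsFibSet N (propLab H) := by
  rw [propLab_eq_image]
  refine isFibSet_of_mod_two_eq_card_filter_lt (image_subset_iff.2 fun a ha => height_mem_Icc ha)
    ?_ ?_
  · rw [card_image_of_injOn height_strictMonoOn.injOn]
    exact H.card_halfPoints_mod_two
  · rintro _ hx
    obtain ⟨a, ha, rfl⟩ := mem_image.1 hx
    rw [card_filter_image_lt_of_strictMonoOn height_strictMonoOn ha, height_mod_two ha,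
      card_filter_halfPoints_lt_mod_two ha]
end
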